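/- arXiv:1006.1125 — 2 statements merged into one kernel-verified Lean document; each statement's English description precedes it below -/
import Mathlib

section
/- Assume max_{cl(Ω)} |∇V| > 0. Then every twice continuously differentiable curve γ : ℝ → cl(Ω) solving γ''(t) + ∇V(γ(t)) = 0 for all t ∈ ℝ satisfies ½|γ'(0)|² + V(γ(0)) ≤ max_{cl(Ω)} V + ½ · diam(cl(Ω)) · max_{cl(Ω)} |∇V|. In particular, every periodic solution of the unperturbed Euler–Lagrange equation with values in cl(Ω) has energy at most max_{cl(Ω)} V + ½ · diam(cl(Ω)) · max_{cl(Ω)} |∇V|. -/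
open Set Metric MeasureTheory Filter Real
open scoped Topology RealInnerProductSpace ENNReal NNReal

noncomputable section

/-- `Ω ⊆ ℝᴺ` has smooth boundary, in the sense that the distance function to the
boundary is smooth at every interior point sufficiently close to the boundary. -/
def SmoothBoundary {N : ℕ} (Ω : Set (EuclideanSpace ℝ (Fin N))) : Prop :=
  ∃ d₀ : ℝ, 0 < d₀ ∧ ∀ q ∈ Ω, Metric.infDist q (frontier Ω) ≤ d₀ →
    ContDiffAt ℝ (⊤ : ℕ∞) (fun x => Metric.infDist x (frontier Ω)) q

/-- `ν` is the outer unit normal field along the boundary of `Ω`. -/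
def IsOuterUnitNormal {N : ℕ} (Ω : Set (EuclideanSpace ℝ (Fin N)))
    (ν : EuclideanSpace ℝ (Fin N) → EuclideanSpace ℝ (Fin N)) : Prop :=
  ∀ q ∈ frontier Ω, ‖ν q‖ = 1 ∧
    ∃ ε : ℝ, 0 < ε ∧ ∀ s : ℝ, 0 < s → s < ε →
      q - s • ν q ∈ Ω ∧ q + s • ν q ∉ closure Ω

/-- `V` is smooth on an open neighborhood of the closure of `Ω`. -/
def SmoothOnNbhdOfClosure {N : ℕ} (Ω : Set (EuclideanSpace ℝ (Fin N)))
    (V : EuclideanSpace ℝ (Fin N) → ℝ) : Prop :=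
  ∃ W : Set (EuclideanSpace ℝ (Fin N)), IsOpen W ∧ closure Ω ⊆ W ∧
    ContDiffOn ℝ (⊤ : ℕ∞) V W

/-! The energy `E = ½|γ'|² + V(γ)` is conserved along a solution. For the virial
`φ(t) = ⟪γ(t) - γ(0), γ'(t)⟫` one has
`φ' = ⟪γ - γ(0), γ''⟫ + |γ'|² ≥ 2 (E - max V) - diam · max |∇V|`,
while `φ` stays bounded because `γ` does and, by conservation of energy, so does `γ'`.
A function on `ℝ` whose derivative is bounded below by a positive constant is unbounded,
so `2 (E - max V) ≤ diam · max |∇V|`. -/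

theorem nonpos_of_le_deriv_of_forall_le {φ : ℝ → ℝ} (hφ : Differentiable ℝ φ) {δ B : ℝ}
    (hδ : ∀ t, δ ≤ deriv φ t) (hB : ∀ t, φ t ≤ B) : δ ≤ 0 := by
  by_contra! hδ0
  set T := (B - φ 0 + 1) / δ
  have hT : 0 ≤ T := div_nonneg (by linarith [hB 0]) hδ0.le
  have hgrowth := mul_sub_le_image_sub_of_le_deriv hφ hδ hT
  have hδT : δ * T = B - φ 0 + 1 := mul_div_cancel₀ _ hδ0.ne'
  linarith [hB T]

section InnerProductSpace

variable {E : Type*} [NormedAddCommGroup E] [InnerProductSpace ℝ E]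

theorem le_mul_of_le_sq_norm_deriv {γ : ℝ → E} (hγ : Differentiable ℝ γ)
    (hγ' : Differentiable ℝ (deriv γ)) {x : E} {R M B c : ℝ} (hR : ∀ t, ‖γ t - x‖ ≤ R)
    (hM : ∀ t, ‖deriv (deriv γ) t‖ ≤ M) (hB : ∀ t, ‖deriv γ t‖ ≤ B)
    (hc : ∀ t, c ≤ ‖deriv γ t‖ ^ 2) : c ≤ R * M := by
  set φ : ℝ → ℝ := fun t => ⟪γ t - x, deriv γ t⟫
  have hφ : ∀ t, HasDerivAt φ (⟪γ t - x, deriv (deriv γ) t⟫ + ⟪deriv γ t, deriv γ t⟫) t :=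
    fun t => ((hγ t).hasDerivAt.sub_const x).inner ℝ (hγ' t).hasDerivAt
  have hR0 : 0 ≤ R := (norm_nonneg _).trans (hR 0)
  have hφ' : ∀ t, c - R * M ≤ deriv φ t := by
    intro t
    have hinner : -(R * M) ≤ ⟪γ t - x, deriv (deriv γ) t⟫ :=
      calc -(R * M) ≤ -(‖γ t - x‖ * ‖deriv (deriv γ) t‖) := by
            gcongr
            exacts [hR t, hM t]
        _ ≤ _ := neg_le_of_abs_le (abs_real_inner_le_norm _ _)
    rw [(hφ t).deriv, real_inner_self_eq_norm_sq]
    linarith [hc t]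
  have hφB : ∀ t, φ t ≤ R * B := fun t =>
    (real_inner_le_norm _ _).trans (mul_le_mul (hR t) (hB t) (norm_nonneg _) hR0)
  linarith [nonpos_of_le_deriv_of_forall_le (fun t => (hφ t).differentiableAt) hφ' hφB]

variable [CompleteSpace E]

theorem ContDiffOn.continuousOn_gradient {V : E → ℝ} {W : Set E} {n : WithTop ℕ∞}
    (hV : ContDiffOn ℝ n V W) (hW : IsOpen W) (hn : 1 ≤ n) : ContinuousOn (gradient V) W :=
  (InnerProductSpace.toDual ℝ E).symm.continuous.comp_continuousOn
    (hV.continuousOn_fderiv_of_isOpen hW hn)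

theorem energy_eq_of_deriv_deriv_eq_neg_gradient {γ : ℝ → E} {V : E → ℝ}
    (hγ : Differentiable ℝ γ) (hγ' : Differentiable ℝ (deriv γ))
    (hV : ∀ t, DifferentiableAt ℝ V (γ t))
    (hEL : ∀ t, deriv (deriv γ) t = -gradient V (γ t)) (t : ℝ) :
    (1 / 2) * ‖deriv γ t‖ ^ 2 + V (γ t) = (1 / 2) * ‖deriv γ 0‖ ^ 2 + V (γ 0) := by
  have henergy : ∀ s, HasDerivAt (fun s => (1 / 2) * ‖deriv γ s‖ ^ 2 + V (γ s)) 0 s := by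
    intro s
    have hkin := ((hγ' s).hasDerivAt.norm_sq).const_mul (1 / 2 : ℝ)
    have hpot := (hV s).hasFDerivAt.comp_hasDerivAt s (hγ s).hasDerivAt
    refine (hkin.add hpot).congr_deriv ?_
    rw [hEL, ← inner_gradient_left, inner_neg_right, real_inner_comm]
    ring
  exact is_const_of_deriv_eq_zero (fun s => (henergy s).differentiableAt)
    (fun s => (henergy s).deriv) t 0

end InnerProductSpace

theorem energy_bound_of_global_interior_solution_general
    {N : ℕ}
    (Ω : Set (EuclideanSpace ℝ (Fin N)))
    (V : EuclideanSpace ℝ (Fin N) → ℝ)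
    (hΩb : Bornology.IsBounded Ω)
    (hV : SmoothOnNbhdOfClosure Ω V)
    (γ : ℝ → EuclideanSpace ℝ (Fin N))
    (hγ : ContDiff ℝ 2 γ)
    (hγΩ : ∀ t : ℝ, γ t ∈ closure Ω)
    (hEL : ∀ t : ℝ, deriv (deriv γ) t = -(gradient V (γ t))) :
    (1/2) * ‖deriv γ 0‖ ^ 2 + V (γ 0) ≤
      sSup (V '' closure Ω) +
        (1/2) * Metric.diam (closure Ω) *
          sSup ((fun q => ‖gradient V q‖) '' closure Ω) := by
  obtain ⟨W, hWo, hΩW, hVW⟩ := hV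
  have hK : IsCompact (closure Ω) := hΩb.isCompact_closure
  obtain ⟨hγ₁, -, hγ₂⟩ := contDiff_succ_iff_deriv.mp (show ContDiff ℝ (1 + 1) γ from hγ)
  have hγ₂ : Differentiable ℝ (deriv γ) := hγ₂.differentiable one_ne_zero
  have hVc : ContinuousOn V (closure Ω) := hVW.continuousOn.mono hΩW
  have hgradc : ContinuousOn (fun q => ‖gradient V q‖) (closure Ω) :=
    ((hVW.continuousOn_gradient hWo (by simp)).mono hΩW).norm
  set E₀ := (1/2) * ‖deriv γ 0‖ ^ 2 + V (γ 0)
  have hE : ∀ t, (1/2) * ‖deriv γ t‖ ^ 2 + V (γ t) = E₀ :=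
    energy_eq_of_deriv_deriv_eq_neg_gradient hγ₁ hγ₂
      (fun t => (hVW.contDiffAt (hWo.mem_nhds (hΩW (hγΩ t)))).differentiableAt (by simp)) hEL
  have hVmax : ∀ t, V (γ t) ≤ sSup (V '' closure Ω) := fun t =>
    le_csSup (hK.bddAbove_image hVc) (mem_image_of_mem _ (hγΩ t))
  have hVmin : ∀ t, sInf (V '' closure Ω) ≤ V (γ t) := fun t =>
    csInf_le (hK.bddBelow_image hVc) (mem_image_of_mem _ (hγΩ t))
  have hR : ∀ t, ‖γ t - γ 0‖ ≤ diam (closure Ω) := fun t =>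
    (dist_eq_norm _ _).symm.trans_le (dist_le_diam_of_mem hΩb.closure (hγΩ t) (hγΩ 0))
  have hM : ∀ t, ‖deriv (deriv γ) t‖ ≤ sSup ((fun q => ‖gradient V q‖) '' closure Ω) := by
    intro t
    rw [hEL, norm_neg]
    exact le_csSup (hK.bddAbove_image hgradc) (mem_image_of_mem _ (hγΩ t))
  have hB : ∀ t, ‖deriv γ t‖ ≤ √(2 * (E₀ - sInf (V '' closure Ω))) := fun t =>
    (abs_norm _).symm.trans_le (Real.abs_le_sqrt (by linarith [hE t, hVmin t]))
  have hc : ∀ t, 2 * (E₀ - sSup (V '' closure Ω)) ≤ ‖deriv γ t‖ ^ 2 := fun t => by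
    linarith [hE t, hVmax t]
  linarith [le_mul_of_le_sq_norm_deriv hγ₁ hγ₂ hR hM hB hc]

/-- If `max_{cl(Ω)} |∇V| > 0`, then every `C²` curve `γ : ℝ → cl(Ω)` solving
`γ'' + ∇V(γ) = 0` on all of `ℝ` has energy
`½|γ'(0)|² + V(γ(0)) ≤ max_{cl(Ω)} V + ½ · diam(cl(Ω)) · max_{cl(Ω)} |∇V|`. -/
theorem energy_bound_of_global_interior_solution
    {N : ℕ} (hN : 1 ≤ N)
    (Ω : Set (EuclideanSpace ℝ (Fin N)))
    (ν : EuclideanSpace ℝ (Fin N) → EuclideanSpace ℝ (Fin N))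
    (V : EuclideanSpace ℝ (Fin N) → ℝ)
    (hΩne : Ω.Nonempty) (hΩo : IsOpen Ω) (hΩb : Bornology.IsBounded Ω)
    (hΩs : SmoothBoundary Ω) (hν : IsOuterUnitNormal Ω ν)
    (hV : SmoothOnNbhdOfClosure Ω V)
    (hgrad : 0 < sSup ((fun q => ‖gradient V q‖) '' closure Ω))
    (γ : ℝ → EuclideanSpace ℝ (Fin N))
    (hγ : ContDiff ℝ 2 γ)
    (hγΩ : ∀ t : ℝ, γ t ∈ closure Ω)
    (hEL : ∀ t : ℝ, deriv (deriv γ) t = -(gradient V (γ t))) :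
    (1/2) * ‖deriv γ 0‖ ^ 2 + V (γ 0) ≤
      sSup (V '' closure Ω) +
        (1/2) * Metric.diam (closure Ω) *
          sSup ((fun q => ‖gradient V q‖) '' closure Ω) :=
  energy_bound_of_global_interior_solution_general Ω V hΩb hV γ hγ hγΩ hEL
end
end

section
/- For every E > max_{cl(Ω)} V there exists ε₀ > 0 such that for all ε ∈ (0, ε₀]: every q ∈ Ω with V(q) + εU(q) = E satisfies ∇V(q) + ε∇U(q) ≠ 0. Consequently, E is a regular value of the Hamiltonian H_ε(q,p) = ½|p|² + V(q) + εU(q) on Ω × ℝ^N, i.e. the gradient of H_ε does not vanish at any point of the level set {H_ε = E}. -/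
open Set Metric MeasureTheory Filter Real
open scoped Topology RealInnerProductSpace ENNReal NNReal

noncomputable section

/-- The data entering the construction of the potential `U`: a constant `d₀ ∈ (0, ½)`
such that the distance to the boundary is smooth at interior points at distance `≤ 2d₀`
from the boundary, and a smooth cutoff function `k : [0,∞) → [0,2d₀]` with `0 ≤ k' ≤ 1`,
`k(x) = x` for `x ≤ d₀` and `k` constant for `x ≥ 2d₀`. -/
structure BoundaryCutoff {N : ℕ} (Ω : Set (EuclideanSpace ℝ (Fin N)))
    (d₀ : ℝ) (k : ℝ → ℝ) : Prop where
  d0_pos : 0 < d₀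
  d0_lt_half : d₀ < 1 / 2
  dist_smooth : ∀ q ∈ Ω, Metric.infDist q (frontier Ω) ≤ 2 * d₀ →
    ContDiffAt ℝ (⊤ : ℕ∞) (fun x => Metric.infDist x (frontier Ω)) q
  k_smooth : ContDiff ℝ (⊤ : ℕ∞) k
  k_mem : ∀ x : ℝ, 0 ≤ x → k x ∈ Set.Icc 0 (2 * d₀)
  k_deriv_mem : ∀ x : ℝ, 0 ≤ x → deriv k x ∈ Set.Icc (0 : ℝ) 1
  k_eq_id : ∀ x : ℝ, 0 ≤ x → x ≤ d₀ → k x = x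
  k_const : ∀ x : ℝ, 2 * d₀ ≤ x → k x = k (2 * d₀)

/-- The function `h(q) = k(dist(q, ∂Ω))`. -/
def hfun {N : ℕ} (Ω : Set (EuclideanSpace ℝ (Fin N))) (k : ℝ → ℝ) :
    EuclideanSpace ℝ (Fin N) → ℝ :=
  fun q => k (Metric.infDist q (frontier Ω))

/-- The potential `U(q) = 1 / h(q)²`. -/
def Ufun {N : ℕ} (Ω : Set (EuclideanSpace ℝ (Fin N))) (k : ℝ → ℝ) :
    EuclideanSpace ℝ (Fin N) → ℝ :=
  fun q => 1 / (hfun Ω k q) ^ 2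

/-- A smooth `τ`-periodic solution `γ : ℝ/τℤ → Ω` of the perturbed Euler-Lagrange
equation `γ'' + ∇V(γ) + ε ∇U(γ) = 0`. -/
def IsPerturbedSolution {N : ℕ} (Ω : Set (EuclideanSpace ℝ (Fin N)))
    (V U : EuclideanSpace ℝ (Fin N) → ℝ) (ε τ : ℝ)
    (γ : ℝ → EuclideanSpace ℝ (Fin N)) : Prop :=
  0 < τ ∧ Function.Periodic γ τ ∧ ContDiff ℝ (⊤ : ℕ∞) γ ∧ (∀ t, γ t ∈ Ω) ∧
    ∀ t : ℝ, deriv (deriv γ) t = -(gradient V (γ t) + ε • gradient U (γ t))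

/-! On the level set `{V + εU = E}` one has `εU ≥ δ := E - max V > 0`, i.e. `h² ≤ ε/δ`: for small
`ε` the point lies within `d₀` of `∂Ω`, where `U = dist(·, ∂Ω)⁻²`. Along the unit ray towards a
nearest boundary point the distance decreases at unit speed, so `U` grows there at rate
`2 / dist³`. Since `dist² ≤ ε/δ`, once `ε ≤ δ³/M²` (with `M` a bound for `|∇V|` on `cl(Ω)`) the
component of `ε∇U` along that ray is at least `2M`, which `∇V` cannot cancel. -/

theorem exists_unit_infDist_add_smul_eq {E : Type*} [NormedAddCommGroup E] [NormedSpace ℝ E]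
    [ProperSpace E] {F : Set E} (hF : IsClosed F) {q : E} (hq : 0 < infDist q F) :
    ∃ u : E, ‖u‖ = 1 ∧ ∀ s, 0 ≤ s → s ≤ infDist q F → infDist (q + s • u) F = infDist q F - s := by
  set r := infDist q F
  have hFne : F.Nonempty := by
    by_contra h
    simp [r, Set.not_nonempty_iff_eq_empty.mp h] at hq
  obtain ⟨y, hyF, hyq⟩ := hF.exists_infDist_eq_dist hFne q
  set u := r⁻¹ • (y - q)
  have hy : y = q + r • u := by simp [u, smul_smul, hq.ne']
  have hu : ‖u‖ = 1 := by
    rw [norm_smul, ← dist_eq_norm, dist_comm, ← hyq, norm_inv, Real.norm_of_nonneg hq.le,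
      inv_mul_cancel₀ hq.ne']
  refine ⟨u, hu, fun s hs0 hsr => le_antisymm ?_ ?_⟩
  · calc infDist (q + s • u) F ≤ dist (q + s • u) y := infDist_le_dist_of_mem hyF
      _ = ‖(r - s) • u‖ := by rw [dist_comm, dist_eq_norm, hy]; congr 1; module
      _ = r - s := by rw [norm_smul, hu, mul_one, Real.norm_of_nonneg (by linarith)]
  · have := infDist_le_infDist_add_dist (x := q) (y := q + s • u) (s := F)
    rw [dist_self_add_right, norm_smul, hu, mul_one, Real.norm_of_nonneg hs0] at this
    linarith

theorem HasGradientAt.inner_eq_of_eventuallyEq_ray {E : Type*} [NormedAddCommGroup E]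
    [InnerProductSpace ℝ E] [CompleteSpace E] {f : E → ℝ} {g q u : E} {φ : ℝ → ℝ} {φ' : ℝ}
    (hf : HasGradientAt f g q) (hφ : HasDerivAt φ φ' 0)
    (heq : (fun s : ℝ => f (q + s • u)) =ᶠ[𝓝[≥] 0] φ) : ⟪g, u⟫ = φ' := by
  have hline : HasDerivAt (fun s : ℝ => q + s • u) u 0 := by
    simpa using ((hasDerivAt_id (0 : ℝ)).smul_const u).const_add q
  have hray : HasDerivAt (fun s : ℝ => f (q + s • u)) ⟪g, u⟫ 0 := by
    have hf' : HasFDerivAt f (InnerProductSpace.toDual ℝ E g) (q + (0 : ℝ) • u) := by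
      simpa using hf.hasFDerivAt
    exact hf'.comp_hasDerivAt 0 hline
  exact (uniqueDiffOn_Ici 0 0 self_mem_Ici).eq_deriv _ hray.hasDerivWithinAt
    (hφ.hasDerivWithinAt.congr_of_eventuallyEq heq (heq.eq_of_nhdsWithin self_mem_Ici))

theorem hasDerivAt_one_div_sub_sq {r : ℝ} (hr : r ≠ 0) :
    HasDerivAt (fun s : ℝ => 1 / (r - s) ^ 2) (2 / r ^ 3) 0 := by
  have hsq : HasDerivAt (fun s : ℝ => (r - s) ^ 2) (-(2 * r)) 0 := by
    simpa using ((hasDerivAt_id' (0 : ℝ)).const_sub r).fun_pow 2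
  refine ((hasDerivAt_const (0 : ℝ) (1 : ℝ)).div hsq
    (by simpa using pow_ne_zero 2 hr)).congr_deriv ?_
  field_simp
  ring

theorem mul_pow_three_le_of_mul_sq_le {δ M ε g : ℝ} (hδ : 0 < δ) (hM : 0 < M)
    (hε : ε ≤ δ ^ 3 / M ^ 2) (hg2 : δ * g ^ 2 ≤ ε) : M * g ^ 3 ≤ ε := by
  have hMg : M * g ≤ δ := by
    refine le_of_pow_le_pow_left₀ two_ne_zero hδ.le (le_of_mul_le_mul_right ?_ hδ)
    calc (M * g) ^ 2 * δ = M ^ 2 * (δ * g ^ 2) := by ring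
      _ ≤ M ^ 2 * (δ ^ 3 / M ^ 2) := by gcongr; exact hg2.trans hε
      _ = δ ^ 2 * δ := by field_simp
  calc M * g ^ 3 = (M * g) * g ^ 2 := by ring
    _ ≤ δ * g ^ 2 := by gcongr
    _ ≤ ε := hg2

namespace BoundaryCutoff

variable {N : ℕ} {Ω : Set (EuclideanSpace ℝ (Fin N))} {d₀ : ℝ} {k : ℝ → ℝ}

theorem monotoneOn (hbc : BoundaryCutoff Ω d₀ k) : MonotoneOn k (Ici 0) :=
  monotoneOn_of_deriv_nonneg (convex_Ici 0) hbc.k_smooth.continuous.continuousOn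
    ((hbc.k_smooth.differentiable (by simp)).differentiableOn.mono interior_subset) <| by
      rw [interior_Ici]
      exact fun x hx => (hbc.k_deriv_mem x (le_of_lt hx)).1

theorem hfun_eq_infDist (hbc : BoundaryCutoff Ω d₀ k) {q : EuclideanSpace ℝ (Fin N)}
    (hq : infDist q (frontier Ω) ≤ d₀) : hfun Ω k q = infDist q (frontier Ω) :=
  hbc.k_eq_id _ infDist_nonneg hq

theorem infDist_lt_of_hfun_lt (hbc : BoundaryCutoff Ω d₀ k) {q : EuclideanSpace ℝ (Fin N)}
    (hq : hfun Ω k q < d₀) : infDist q (frontier Ω) < d₀ := by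
  by_contra! h
  have := hbc.monotoneOn hbc.d0_pos.le (infDist_nonneg (x := q)) h
  rw [hbc.k_eq_id d₀ hbc.d0_pos.le le_rfl] at this
  exact (this.trans_lt hq).false

theorem exists_inner_gradient_Ufun_eq (hbc : BoundaryCutoff Ω d₀ k)
    {q : EuclideanSpace ℝ (Fin N)} (hq : q ∈ Ω) (hpos : 0 < infDist q (frontier Ω))
    (hlt : infDist q (frontier Ω) < d₀) :
    ∃ u, ‖u‖ = 1 ∧ ⟪gradient (Ufun Ω k) q, u⟫ = 2 / infDist q (frontier Ω) ^ 3 := by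
  obtain ⟨u, hu, hray⟩ := exists_unit_infDist_add_smul_eq isClosed_frontier hpos
  have hnear : Ufun Ω k =ᶠ[𝓝 q] fun x => 1 / infDist x (frontier Ω) ^ 2 := by
    filter_upwards [(continuous_infDist_pt _).continuousAt.preimage_mem_nhds
      (Iio_mem_nhds hlt)] with x hx
    rw [Ufun, hbc.hfun_eq_infDist (le_of_lt hx)]
  have hdiff : DifferentiableAt ℝ (Ufun Ω k) q := by
    refine hnear.differentiableAt_iff.mpr ?_
    simp only [one_div]
    exact (((hbc.dist_smooth q hq (by linarith [hbc.d0_pos])).differentiableAt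
      (by simp)).pow 2).inv (pow_ne_zero 2 hpos.ne')
  refine ⟨u, hu, hdiff.hasGradientAt.inner_eq_of_eventuallyEq_ray
    (hasDerivAt_one_div_sub_sq hpos.ne') ?_⟩
  filter_upwards [Ico_mem_nhdsGE hpos] with s hs
  rw [Ufun, hbc.hfun_eq_infDist (by linarith [hray s hs.1 hs.2.le, hs.1]), hray s hs.1 hs.2.le]

theorem gradient_add_smul_gradient_Ufun_ne_zero (hbc : BoundaryCutoff Ω d₀ k)
    {V : EuclideanSpace ℝ (Fin N) → ℝ} {q : EuclideanSpace ℝ (Fin N)} (hq : q ∈ Ω)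
    {M δ ε : ℝ} (hM : 0 < M) (hδ : 0 < δ) (hε₁ : ε ≤ δ * d₀ ^ 2 / 2) (hε₂ : ε ≤ δ ^ 3 / M ^ 2)
    (hV : ‖gradient V q‖ ≤ M) (hU : δ ≤ ε * Ufun Ω k q) :
    gradient V q + ε • gradient (Ufun Ω k) q ≠ 0 := by
  obtain ⟨h, hdef⟩ : ∃ h, hfun Ω k q = h := ⟨_, rfl⟩
  rw [Ufun, hdef, mul_one_div] at hU
  have hh : 0 < h := by
    have h0le : 0 ≤ h := by rw [← hdef]; exact (hbc.k_mem _ infDist_nonneg).1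
    refine h0le.lt_of_ne' fun h0 => ?_
    rw [h0, zero_pow two_ne_zero, div_zero] at hU
    linarith
  have hh2 : δ * h ^ 2 ≤ ε := (le_div_iff₀ (by positivity)).1 hU
  have hhd : hfun Ω k q < d₀ := by
    rw [hdef]
    refine (pow_lt_pow_iff_left₀ hh.le hbc.d0_pos.le two_ne_zero).1
      (lt_of_mul_lt_mul_left ?_ hδ.le)
    linarith [mul_pos hδ (pow_pos hbc.d0_pos 2)]
  have hdist := hbc.infDist_lt_of_hfun_lt hhd
  have hhg : h = infDist q (frontier Ω) := hdef ▸ hbc.hfun_eq_infDist hdist.le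
  rw [hhg] at hh hh2
  obtain ⟨u, hu, hUu⟩ := hbc.exists_inner_gradient_Ufun_eq hq hh hdist
  have hVu : -M ≤ ⟪gradient V q, u⟫ := by
    have := abs_real_inner_le_norm (gradient V q) u
    rw [hu, mul_one] at this
    linarith [neg_abs_le ⟪gradient V q, u⟫]
  have hcube := mul_pow_three_le_of_mul_sq_le hδ hM hε₂ hh2
  have hrepel : 2 * M ≤ ε * (2 / infDist q (frontier Ω) ^ 3) := by
    rw [mul_div_assoc', le_div_iff₀ (by positivity)]
    linarith
  intro h0
  have := congrArg (⟪·, u⟫) h0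
  simp only [inner_add_left, real_inner_smul_left, hUu, inner_zero_left] at this
  linarith

end BoundaryCutoff

namespace SmoothOnNbhdOfClosure

variable {N : ℕ} {Ω : Set (EuclideanSpace ℝ (Fin N))} {V : EuclideanSpace ℝ (Fin N) → ℝ}

theorem bddAbove_image_closure (hV : SmoothOnNbhdOfClosure Ω V) (hΩ : Bornology.IsBounded Ω) :
    BddAbove (V '' closure Ω) := by
  obtain ⟨W, -, hΩW, hVW⟩ := hV
  exact (hΩ.isCompact_closure.image_of_continuousOn (hVW.continuousOn.mono hΩW)).bddAbove

theorem exists_norm_gradient_le (hV : SmoothOnNbhdOfClosure Ω V) (hΩ : Bornology.IsBounded Ω) :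
    ∃ M, 0 < M ∧ ∀ x ∈ closure Ω, ‖gradient V x‖ ≤ M := by
  obtain ⟨W, hW, hΩW, hVW⟩ := hV
  obtain ⟨M, hM⟩ := hΩ.isCompact_closure.exists_bound_of_continuousOn
    ((hVW.continuousOn_fderiv_of_isOpen hW (by simp)).mono hΩW)
  refine ⟨max M 1, by positivity, fun x hx => ?_⟩
  rw [gradient, LinearIsometryEquiv.norm_map]
  exact (hM x hx).trans (le_max_left _ _)

end SmoothOnNbhdOfClosure

theorem energy_level_is_regular_value_general
    {N : ℕ}
    (Ω : Set (EuclideanSpace ℝ (Fin N)))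
    (V : EuclideanSpace ℝ (Fin N) → ℝ)
    (hΩb : Bornology.IsBounded Ω)
    (hV : SmoothOnNbhdOfClosure Ω V)
    (d₀ : ℝ) (k : ℝ → ℝ) (hbc : BoundaryCutoff Ω d₀ k)
    (E : ℝ) (hE : sSup (V '' closure Ω) < E) :
    ∃ ε₀ : ℝ, 0 < ε₀ ∧ ∀ ε : ℝ, 0 < ε → ε ≤ ε₀ →
      (∀ q ∈ Ω, V q + ε * Ufun Ω k q = E →
        gradient V q + ε • gradient (Ufun Ω k) q ≠ 0) ∧
      (∀ q ∈ Ω, ∀ p : EuclideanSpace ℝ (Fin N),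
        (1/2) * ‖p‖ ^ 2 + V q + ε * Ufun Ω k q = E →
        ¬ (p = 0 ∧ gradient V q + ε • gradient (Ufun Ω k) q = 0)) := by
  obtain ⟨M, hM, hgradV⟩ := hV.exists_norm_gradient_le hΩb
  set δ := E - sSup (V '' closure Ω)
  have hδ : 0 < δ := sub_pos.2 hE
  have hVle (q) (hq : q ∈ Ω) : V q ≤ sSup (V '' closure Ω) :=
    le_csSup (hV.bddAbove_image_closure hΩb) (mem_image_of_mem V (subset_closure hq))
  have hd₀ := hbc.d0_pos
  refine ⟨min (δ * d₀ ^ 2 / 2) (δ ^ 3 / M ^ 2), by positivity, fun ε _ hε => ?_⟩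
  have hregular (q) (hq : q ∈ Ω) (hlevel : V q + ε * Ufun Ω k q = E) :
      gradient V q + ε • gradient (Ufun Ω k) q ≠ 0 :=
    hbc.gradient_add_smul_gradient_Ufun_ne_zero hq hM hδ (hε.trans (min_le_left _ _))
      (hε.trans (min_le_right _ _)) (hgradV q (subset_closure hq)) (by linarith [hVle q hq])
  refine ⟨hregular, fun q hq p hp ⟨hp0, hgrad⟩ => hregular q hq ?_ hgrad⟩
  simpa [hp0] using hp

/-- **Lemma 3.1.** Every `E > max_{cl(Ω)} V` is a regular value of the Hamiltonian
`H_ε(q,p) = ½|p|² + V(q) + εU(q)` for all sufficiently small `ε > 0`: the gradient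
`∇(V + εU)` does not vanish on `{V + εU = E}`, and consequently the (partial)
gradient of `H_ε` does not vanish at any point of `{H_ε = E}`. -/
theorem energy_level_is_regular_value
    {N : ℕ} (hN : 1 ≤ N)
    (Ω : Set (EuclideanSpace ℝ (Fin N)))
    (V : EuclideanSpace ℝ (Fin N) → ℝ)
    (hΩne : Ω.Nonempty) (hΩo : IsOpen Ω) (hΩb : Bornology.IsBounded Ω)
    (hV : SmoothOnNbhdOfClosure Ω V)
    (d₀ : ℝ) (k : ℝ → ℝ) (hbc : BoundaryCutoff Ω d₀ k)
    (E : ℝ) (hE : sSup (V '' closure Ω) < E) :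
    ∃ ε₀ : ℝ, 0 < ε₀ ∧ ∀ ε : ℝ, 0 < ε → ε ≤ ε₀ →
      (∀ q ∈ Ω, V q + ε * Ufun Ω k q = E →
        gradient V q + ε • gradient (Ufun Ω k) q ≠ 0) ∧
      (∀ q ∈ Ω, ∀ p : EuclideanSpace ℝ (Fin N),
        (1/2) * ‖p‖ ^ 2 + V q + ε * Ufun Ω k q = E →
        ¬ (p = 0 ∧ gradient V q + ε • gradient (Ufun Ω k) q = 0)) :=
  energy_level_is_regular_value_general Ω V hΩb hV d₀ k hbc E hE
end
end
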